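/- Let (H, B, φ) be a Hopf bracoid over a field K such that φ is a coalgebra morphism. Then for all h ∈ H and b ∈ B, Φ(h ⊗ S_B(b)) = Σ S_B(φ(h₍₁₎ ⊗ b)) · u(h₍₂₎), where u(h) := φ(h ⊗ 1_B) and Φ(h ⊗ b) := Σ S_B(u(h₍₁₎)) · φ(h₍₂₎ ⊗ b). -/

import Mathlib

open TensorProduct LinearMap

noncomputable section

namespace HopfBracoidPaper

variable (K : Type*) [Field K]
variable (H B : Type*) [Ring H] [Ring B] [HopfAlgebra K H] [HopfAlgebra K B]

/-- `u(h) = φ(h ⊗ 1_B)`. -/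
def uMap (φ : H ⊗[K] B →ₗ[K] B) : H →ₗ[K] B :=
  φ ∘ₗ (TensorProduct.mk K H B).flip 1

/-- `Φ(h ⊗ b) = Σ S_B(u(h₍₁₎)) · φ(h₍₂₎ ⊗ b)`. -/
def PhiMap (φ : H ⊗[K] B →ₗ[K] B) : H ⊗[K] B →ₗ[K] B :=
  LinearMap.mul' K B
    ∘ₗ TensorProduct.map (HopfAlgebra.antipode (R := K) ∘ₗ uMap K H B φ) φ
    ∘ₗ (TensorProduct.assoc K H H B).toLinearMap
    ∘ₗ LinearMap.rTensor B (Coalgebra.comul (R := K))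

/-- `(B, φ)` is a left `H`-module. -/
structure IsModuleAction (φ : H ⊗[K] B →ₗ[K] B) : Prop where
  one_act : ∀ b : B, φ ((1 : H) ⊗ₜ[K] b) = b
  mul_act : ∀ (h h' : H) (b : B), φ ((h * h') ⊗ₜ[K] b) = φ (h ⊗ₜ[K] φ (h' ⊗ₜ[K] b))

/-- `(H, B, φ)` is a Hopf bracoid: `(B, φ)` is a left `H`-module and
`φ(h ⊗ b·b') = Σ φ(h₍₁₎ ⊗ b) · Φ(h₍₂₎ ⊗ b')`. -/
structure IsHopfBracoid (φ : H ⊗[K] B →ₗ[K] B) : Prop where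
  one_act : ∀ b : B, φ ((1 : H) ⊗ₜ[K] b) = b
  mul_act : ∀ (h h' : H) (b : B), φ ((h * h') ⊗ₜ[K] b) = φ (h ⊗ₜ[K] φ (h' ⊗ₜ[K] b))
  compat : ∀ (h : H) (b b' : B),
    φ (h ⊗ₜ[K] (b * b')) =
      (LinearMap.mul' K B
        ∘ₗ TensorProduct.map φ (PhiMap K H B φ)
        ∘ₗ (TensorProduct.tensorTensorTensorComm K H H B B).toLinearMap)
        ((Coalgebra.comul (R := K) h) ⊗ₜ[K] (b ⊗ₜ[K] b'))

/-- `φ : H ⊗ B → B` is a coalgebra morphism: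
`ε_B(φ(h ⊗ b)) = ε_H(h) ε_B(b)` and
`δ_B(φ(h ⊗ b)) = Σ φ(h₍₁₎ ⊗ b₍₁₎) ⊗ φ(h₍₂₎ ⊗ b₍₂₎)`. -/
structure IsCoalgebraMorphism (φ : H ⊗[K] B →ₗ[K] B) : Prop where
  counit_comp : ∀ (h : H) (b : B),
    Coalgebra.counit (R := K) (φ (h ⊗ₜ[K] b)) =
      Coalgebra.counit (R := K) h * Coalgebra.counit (R := K) b
  comul_comp : ∀ (h : H) (b : B),
    Coalgebra.comul (R := K) (φ (h ⊗ₜ[K] b)) =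
      (TensorProduct.map φ φ)
        ((TensorProduct.tensorTensorTensorComm K H H B B)
          ((Coalgebra.comul (R := K) h) ⊗ₜ[K] (Coalgebra.comul (R := K) b)))

/-- `(B, ψ)` is a left `H`-module algebra. -/
structure IsModuleAlgebra (ψ : H ⊗[K] B →ₗ[K] B) : Prop where
  one_act : ∀ b : B, ψ ((1 : H) ⊗ₜ[K] b) = b
  mul_act : ∀ (h h' : H) (b : B), ψ ((h * h') ⊗ₜ[K] b) = ψ (h ⊗ₜ[K] ψ (h' ⊗ₜ[K] b))
  act_one : ∀ h : H, ψ (h ⊗ₜ[K] (1 : B)) = Coalgebra.counit (R := K) h • (1 : B)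
  act_mul : ∀ (h : H) (b b' : B),
    ψ (h ⊗ₜ[K] (b * b')) =
      (LinearMap.mul' K B
        ∘ₗ TensorProduct.map ψ ψ
        ∘ₗ (TensorProduct.tensorTensorTensorComm K H H B B).toLinearMap)
        ((Coalgebra.comul (R := K) h) ⊗ₜ[K] (b ⊗ₜ[K] b'))

/-- `π : H → B` is a 1-cocycle with action `γ`. -/
structure IsOneCocycle (π : H →ₗ[K] B) (γ : H ⊗[K] B →ₗ[K] B) : Prop where
  moduleAlgebra : IsModuleAlgebra K H B γ
  counit_comp : ∀ h : H, Coalgebra.counit (R := K) (π h) = Coalgebra.counit (R := K) h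
  comul_comp : ∀ h : H,
    Coalgebra.comul (R := K) (π h) = (TensorProduct.map π π) (Coalgebra.comul (R := K) h)
  cocycle : ∀ h g : H,
    π (h * g) =
      (LinearMap.mul' K B
        ∘ₗ TensorProduct.map π γ
        ∘ₗ (TensorProduct.assoc K H H B).toLinearMap)
        ((Coalgebra.comul (R := K) h) ⊗ₜ[K] π g)


/-- `Φ'(h ⊗ b) = Σ φ(h₍₁₎ ⊗ b) · S_B(u(h₍₂₎))`. -/
def PhiMap' (φ : H ⊗[K] B →ₗ[K] B) : H ⊗[K] B →ₗ[K] B :=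
  LinearMap.mul' K B
    ∘ₗ TensorProduct.map φ (HopfAlgebra.antipode (R := K) ∘ₗ uMap K H B φ)
    ∘ₗ (TensorProduct.assoc K H B H).symm.toLinearMap
    ∘ₗ LinearMap.lTensor H (TensorProduct.comm K H B).toLinearMap
    ∘ₗ (TensorProduct.assoc K H H B).toLinearMap
    ∘ₗ LinearMap.rTensor B (Coalgebra.comul (R := K))

/-- `ψ(h ⊗ b) = Σ π(h₍₁₎) · γ(h₍₂₎ ⊗ b)`. -/
def psiMap (π : H →ₗ[K] B) (γ : H ⊗[K] B →ₗ[K] B) : H ⊗[K] B →ₗ[K] B :=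
  LinearMap.mul' K B
    ∘ₗ TensorProduct.map π γ
    ∘ₗ (TensorProduct.assoc K H H B).toLinearMap
    ∘ₗ LinearMap.rTensor B (Coalgebra.comul (R := K))

/-- `Σ ψ(h₍₂₎ ⊗ b) ⊗ h₍₁₎ = Σ ψ(h₍₁₎ ⊗ b) ⊗ h₍₂₎` in `B ⊗ H`. -/
def SatisfiesStarCondition (ψ : H ⊗[K] B →ₗ[K] B) : Prop :=
  ∀ (h : H) (b : B),
    ((TensorProduct.comm K H B).toLinearMap ∘ₗ LinearMap.lTensor H ψ)
      ((TensorProduct.assoc K H H B) ((Coalgebra.comul (R := K) h) ⊗ₜ[K] b)) =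
    ((TensorProduct.comm K H B).toLinearMap ∘ₗ LinearMap.lTensor H ψ)
      ((TensorProduct.assoc K H H B)
        (((TensorProduct.comm K H H) (Coalgebra.comul (R := K) h)) ⊗ₜ[K] b))

/-- A Hopf algebra is cocommutative if `c ∘ δ = δ`. -/
def IsCocommutative : Prop :=
  ∀ h : H, (TensorProduct.comm K H H) (Coalgebra.comul (R := K) h) = Coalgebra.comul (R := K) h

/-- `x` is a group-like element: `δ(x) = x ⊗ x` and `ε(x) = 1`. -/
def IsGroupLike (x : B) : Prop :=
  Coalgebra.counit (R := K) x = 1 ∧ Coalgebra.comul (R := K) x = x ⊗ₜ[K] x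

/-- `Φᵒᵖ(h ⊗ b) = Σ φ(h₍₂₎ ⊗ b) · S_B(u(h₍₁₎))`: the `Φ`-map of `φ` with respect to the
opposite multiplication of `B`. -/
def PhiOpMap (φ : H ⊗[K] B →ₗ[K] B) : H ⊗[K] B →ₗ[K] B :=
  LinearMap.mul' K B
    ∘ₗ (TensorProduct.comm K B B).toLinearMap
    ∘ₗ TensorProduct.map (HopfAlgebra.antipode (R := K) ∘ₗ uMap K H B φ) φ
    ∘ₗ (TensorProduct.assoc K H H B).toLinearMap
    ∘ₗ LinearMap.rTensor B (Coalgebra.comul (R := K))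


section ConvolutionAux

open Coalgebra HopfAlgebra

/-- Convolution product on `Hom(H ⊗ B, B)` with respect to the tensor-product coalgebra
structure on `H ⊗ B`. -/
def conv (f g : H ⊗[K] B →ₗ[K] B) : H ⊗[K] B →ₗ[K] B :=
  LinearMap.mul' K B
    ∘ₗ TensorProduct.map f g
    ∘ₗ (TensorProduct.tensorTensorTensorComm K H H B B).toLinearMap
    ∘ₗ TensorProduct.map (Coalgebra.comul (R := K)) (Coalgebra.comul (R := K))

lemma conv_apply (f g : H ⊗[K] B →ₗ[K] B) (h : H) (b : B)
    (rh : Coalgebra.Repr K h (H × H)) (rb : Coalgebra.Repr K b (B × B)) :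
    conv K H B f g (h ⊗ₜ[K] b) =
      ∑ i ∈ rh.index, ∑ j ∈ rb.index,
        f (rh.left i ⊗ₜ[K] rb.left j) * g (rh.right i ⊗ₜ[K] rb.right j) := by
  simp only [conv, LinearMap.coe_comp, Function.comp_apply, TensorProduct.map_tmul]
  rw [← rh.eq, ← rb.eq]
  simp only [TensorProduct.sum_tmul, TensorProduct.tmul_sum, map_sum, LinearEquiv.coe_coe,
    TensorProduct.tensorTensorTensorComm_tmul, TensorProduct.map_tmul, LinearMap.mul'_apply]
  rw [Finset.sum_comm]

/-- `û(h ⊗ b) = ε(b) • u(h)`. -/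
def uHat (φ : H ⊗[K] B →ₗ[K] B) : H ⊗[K] B →ₗ[K] B :=
  uMap K H B φ
    ∘ₗ (TensorProduct.rid K H).toLinearMap
    ∘ₗ LinearMap.lTensor H (Coalgebra.counit (R := K))

lemma uHat_apply (φ : H ⊗[K] B →ₗ[K] B) (h : H) (b : B) :
    uHat K H B φ (h ⊗ₜ[K] b) = Coalgebra.counit (R := K) b • uMap K H B φ h := by
  simp [uHat]

/-- The convolution unit `e(h ⊗ b) = ε(h)ε(b)·1`. -/
def eMap : H ⊗[K] B →ₗ[K] B :=
  Algebra.linearMap K B ∘ₗ LinearMap.mul' K K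
    ∘ₗ TensorProduct.map (Coalgebra.counit (R := K)) (Coalgebra.counit (R := K))

lemma eMap_apply (h : H) (b : B) :
    eMap K H B (h ⊗ₜ[K] b) =
      (Coalgebra.counit (R := K) h * Coalgebra.counit (R := K) b) • (1 : B) := by
  simp [eMap, Algebra.smul_def]

lemma sum_counit_smul {A : Type*} [Ring A] [HopfAlgebra K A] {a : A}
    (r : Coalgebra.Repr K a (A × A)) :
    ∑ i ∈ r.index, Coalgebra.counit (R := K) (r.left i) • r.right i = a := by
  calc ∑ i ∈ r.index, Coalgebra.counit (R := K) (r.left i) • r.right i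
      = TensorProduct.lid K A (∑ i ∈ r.index,
          Coalgebra.counit (R := K) (r.left i) ⊗ₜ[K] r.right i) := by
        rw [map_sum]; simp
    _ = TensorProduct.lid K A ((1 : K) ⊗ₜ[K] a) := by rw [Coalgebra.sum_counit_tmul_eq]
    _ = a := by simp

lemma sum_smul_counit {A : Type*} [Ring A] [HopfAlgebra K A] {a : A}
    (r : Coalgebra.Repr K a (A × A)) :
    ∑ i ∈ r.index, Coalgebra.counit (R := K) (r.right i) • r.left i = a := by
  calc ∑ i ∈ r.index, Coalgebra.counit (R := K) (r.right i) • r.left i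
      = TensorProduct.rid K A (∑ i ∈ r.index,
          r.left i ⊗ₜ[K] Coalgebra.counit (R := K) (r.right i)) := by
        rw [map_sum]; simp
    _ = TensorProduct.rid K A (a ⊗ₜ[K] (1 : K)) := by rw [Coalgebra.sum_tmul_counit_eq]
    _ = a := by simp

lemma conv_eMap_left (q : H ⊗[K] B →ₗ[K] B) : conv K H B (eMap K H B) q = q := by
  apply TensorProduct.ext'
  intro h b
  set rh := Coalgebra.Repr.arbitrary K h with hrh
  set rb := Coalgebra.Repr.arbitrary K b with hrb
  rw [conv_apply K H B _ _ h b rh rb]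
  have : ∀ i j, eMap K H B (rh.left i ⊗ₜ[K] rb.left j) *
      q (rh.right i ⊗ₜ[K] rb.right j) =
      q ((Coalgebra.counit (R := K) (rh.left i) • rh.right i) ⊗ₜ[K]
         (Coalgebra.counit (R := K) (rb.left j) • rb.right j)) := by
    intro i j
    rw [eMap_apply, smul_mul_assoc, one_mul, ← TensorProduct.smul_tmul',
      TensorProduct.tmul_smul, map_smul, map_smul, mul_smul]
  simp_rw [this]
  have : ∑ i ∈ rh.index, ∑ j ∈ rb.index,
      q ((Coalgebra.counit (R := K) (rh.left i) • rh.right i) ⊗ₜ[K]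
         (Coalgebra.counit (R := K) (rb.left j) • rb.right j)) =
      q ((∑ i ∈ rh.index, Coalgebra.counit (R := K) (rh.left i) • rh.right i) ⊗ₜ[K]
         (∑ j ∈ rb.index, Coalgebra.counit (R := K) (rb.left j) • rb.right j)) := by
    rw [TensorProduct.sum_tmul, map_sum]
    exact Finset.sum_congr rfl fun i _ => by rw [TensorProduct.tmul_sum, map_sum]
  rw [this, sum_counit_smul K rh, sum_counit_smul K rb]

lemma uMap_apply (φ : H ⊗[K] B →ₗ[K] B) (h : H) :
    uMap K H B φ h = φ (h ⊗ₜ[K] (1 : B)) := rfl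

lemma PhiMap_comp_lTensor_antipode_apply (φ : H ⊗[K] B →ₗ[K] B) (h : H) (b : B) :
    (PhiMap K H B φ ∘ₗ LinearMap.lTensor H (HopfAlgebra.antipode (R := K))) (h ⊗ₜ[K] b)
      = PhiMap K H B φ (h ⊗ₜ[K] HopfAlgebra.antipode (R := K) b) := by
  simp

set_option synthInstance.maxHeartbeats 1000000 in
set_option maxHeartbeats 1000000 in
/-- The compatibility condition of a Hopf bracoid, in summed form. -/
lemma compat_sum (φ : H ⊗[K] B →ₗ[K] B) (hbr : IsHopfBracoid K H B φ)
    (h : H) (b b' : B) (rh : Coalgebra.Repr K h (H × H)) :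
    φ (h ⊗ₜ[K] (b * b')) =
      ∑ i ∈ rh.index, φ (rh.left i ⊗ₜ[K] b) * PhiMap K H B φ (rh.right i ⊗ₜ[K] b') := by
  rw [hbr.compat h b b']
  simp only [LinearMap.coe_comp, Function.comp_apply, LinearEquiv.coe_coe]
  rw [← rh.eq]
  simp [TensorProduct.sum_tmul, TensorProduct.tensorTensorTensorComm_tmul]

/-- `φ * (Φ ∘ (id ⊗ S)) = û` in the convolution algebra. -/
lemma conv_phi_PhiS (φ : H ⊗[K] B →ₗ[K] B) (hbr : IsHopfBracoid K H B φ) :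
    conv K H B φ (PhiMap K H B φ ∘ₗ LinearMap.lTensor H (HopfAlgebra.antipode (R := K)))
      = uHat K H B φ := by
  apply TensorProduct.ext'
  intro h b
  let rh := Coalgebra.Repr.arbitrary K h
  let rb := Coalgebra.Repr.arbitrary K b
  rw [conv_apply K H B _ _ h b rh rb]
  simp only [LinearMap.coe_comp, Function.comp_apply, LinearMap.lTensor_tmul]
  rw [Finset.sum_comm]
  have step : ∀ j, (∑ i ∈ rh.index, φ (rh.left i ⊗ₜ[K] rb.left j) *
      PhiMap K H B φ (rh.right i ⊗ₜ[K] HopfAlgebra.antipode (R := K) (rb.right j))) =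
      φ (h ⊗ₜ[K] (rb.left j * HopfAlgebra.antipode (R := K) (rb.right j))) :=
    fun j => (compat_sum K H B φ hbr h _ _ rh).symm
  simp_rw [step]
  have : ∑ j ∈ rb.index, φ (h ⊗ₜ[K] (rb.left j * HopfAlgebra.antipode (R := K) (rb.right j)))
      = φ (h ⊗ₜ[K] ∑ j ∈ rb.index,
          rb.left j * HopfAlgebra.antipode (R := K) (rb.right j)) := by
    rw [TensorProduct.tmul_sum, map_sum]
  rw [this, HopfAlgebra.sum_mul_antipode_eq_smul rb, TensorProduct.tmul_smul, map_smul,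
    uHat_apply, uMap_apply]

set_option synthInstance.maxHeartbeats 1000000 in
set_option maxHeartbeats 1000000 in
/-- `(S ∘ φ) * φ = e` in the convolution algebra. -/
lemma conv_Sphi_phi (φ : H ⊗[K] B →ₗ[K] B) (hco : IsCoalgebraMorphism K H B φ) :
    conv K H B (HopfAlgebra.antipode (R := K) ∘ₗ φ) φ = eMap K H B := by
  apply TensorProduct.ext'
  intro h b
  let rh := Coalgebra.Repr.arbitrary K h
  let rb := Coalgebra.Repr.arbitrary K b
  have eqaux : ∑ i ∈ rh.index, ∑ j ∈ rb.index,
      φ (rh.left i ⊗ₜ[K] rb.left j) ⊗ₜ[K] φ (rh.right i ⊗ₜ[K] rb.right j)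
      = Coalgebra.comul (R := K) (φ (h ⊗ₜ[K] b)) := by
    rw [hco.comul_comp h b, ← rh.eq, ← rb.eq]
    simp only [TensorProduct.sum_tmul, TensorProduct.tmul_sum, map_sum,
      TensorProduct.tensorTensorTensorComm_tmul, TensorProduct.map_tmul]
    exact Finset.sum_comm
  have key := HopfAlgebra.sum_antipode_mul_eq_smul (R := K)
    (⟨rh.index ×ˢ rb.index,
      fun p => φ (rh.left p.1 ⊗ₜ[K] rb.left p.2),
      fun p => φ (rh.right p.1 ⊗ₜ[K] rb.right p.2),
      by rw [Finset.sum_product]; exact eqaux⟩ : Coalgebra.Repr K (φ (h ⊗ₜ[K] b)) ((H × H) × (B × B)))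
  rw [Finset.sum_product] at key
  rw [conv_apply K H B _ _ h b rh rb]
  simp only [LinearMap.coe_comp, Function.comp_apply]
  rw [eMap_apply, ← hco.counit_comp h b]
  exact key


lemma sum4_comm {M : Type*} [AddCommMonoid M] {α β : Type*} {ια : α → Type*} {ιβ : β → Type*}
    (s : Finset α) (t : Finset β) (sa : ∀ a, Finset (ια a)) (tb : ∀ b, Finset (ιβ b))
    (F : ∀ a, ια a → ∀ b, ιβ b → M) :
    (∑ a ∈ s, ∑ a' ∈ sa a, ∑ b ∈ t, ∑ b' ∈ tb b, F a a' b b')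
      = ∑ b ∈ t, ∑ b' ∈ tb b, ∑ a ∈ s, ∑ a' ∈ sa a, F a a' b b' := by
  calc (∑ a ∈ s, ∑ a' ∈ sa a, ∑ b ∈ t, ∑ b' ∈ tb b, F a a' b b')
      = ∑ a ∈ s, ∑ b ∈ t, ∑ a' ∈ sa a, ∑ b' ∈ tb b, F a a' b b' :=
        Finset.sum_congr rfl fun a _ => Finset.sum_comm
    _ = ∑ b ∈ t, ∑ a ∈ s, ∑ a' ∈ sa a, ∑ b' ∈ tb b, F a a' b b' := Finset.sum_comm
    _ = ∑ b ∈ t, ∑ a ∈ s, ∑ b' ∈ tb b, ∑ a' ∈ sa a, F a a' b b' :=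
        Finset.sum_congr rfl fun b _ => Finset.sum_congr rfl fun a _ => Finset.sum_comm
    _ = ∑ b ∈ t, ∑ b' ∈ tb b, ∑ a ∈ s, ∑ a' ∈ sa a, F a a' b b' :=
        Finset.sum_congr rfl fun b _ => Finset.sum_comm

/-- The map `(h₁ ⊗ (h₂ ⊗ h₃)) ⊗ (b₁ ⊗ (b₂ ⊗ b₃)) ↦ f(h₁ ⊗ b₁)(g(h₂ ⊗ b₂) k(h₃ ⊗ b₃))`. -/
def NMap (f g k : H ⊗[K] B →ₗ[K] B) :
    (H ⊗[K] (H ⊗[K] H)) ⊗[K] (B ⊗[K] (B ⊗[K] B)) →ₗ[K] B :=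
  LinearMap.mul' K B
    ∘ₗ TensorProduct.map f (LinearMap.mul' K B ∘ₗ TensorProduct.map g k
        ∘ₗ (TensorProduct.tensorTensorTensorComm K H H B B).toLinearMap)
    ∘ₗ (TensorProduct.tensorTensorTensorComm K H (H ⊗[K] H) B (B ⊗[K] B)).toLinearMap

lemma NMap_tmul (f g k : H ⊗[K] B →ₗ[K] B) (x y z : H) (p q r : B) :
    NMap K H B f g k ((x ⊗ₜ[K] (y ⊗ₜ[K] z)) ⊗ₜ[K] (p ⊗ₜ[K] (q ⊗ₜ[K] r)))
      = f (x ⊗ₜ[K] p) * (g (y ⊗ₜ[K] q) * k (z ⊗ₜ[K] r)) := by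
  simp [NMap, TensorProduct.tensorTensorTensorComm_tmul]

lemma conv_assoc (f g k : H ⊗[K] B →ₗ[K] B) :
    conv K H B (conv K H B f g) k = conv K H B f (conv K H B g k) := by
  apply TensorProduct.ext'
  intro h b
  let rh := Coalgebra.Repr.arbitrary K h
  let rb := Coalgebra.Repr.arbitrary K b
  let rh1 : ∀ i, Coalgebra.Repr K (rh.left i) (H × H) := fun i => Coalgebra.Repr.arbitrary K _
  let rh2 : ∀ i, Coalgebra.Repr K (rh.right i) (H × H) := fun i => Coalgebra.Repr.arbitrary K _
  let rb1 : ∀ j, Coalgebra.Repr K (rb.left j) (B × B) := fun j => Coalgebra.Repr.arbitrary K _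
  let rb2 : ∀ j, Coalgebra.Repr K (rb.right j) (B × B) := fun j => Coalgebra.Repr.arbitrary K _
  have hH := Coalgebra.sum_tmul_tmul_eq (R := K) rh rh1 rh2
  have hB := Coalgebra.sum_tmul_tmul_eq (R := K) rb rb1 rb2
  have stepA : conv K H B (conv K H B f g) k (h ⊗ₜ[K] b)
      = ∑ i ∈ rh.index, ∑ i' ∈ (rh1 i).index, ∑ j ∈ rb.index, ∑ j' ∈ (rb1 j).index,
          f ((rh1 i).left i' ⊗ₜ[K] (rb1 j).left j') *
            (g ((rh1 i).right i' ⊗ₜ[K] (rb1 j).right j') *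
              k (rh.right i ⊗ₜ[K] rb.right j)) := by
    rw [conv_apply K H B _ k h b rh rb]
    refine Finset.sum_congr rfl fun i _ => ?_
    have hj : ∀ j, conv K H B f g (rh.left i ⊗ₜ[K] rb.left j) * k (rh.right i ⊗ₜ[K] rb.right j)
        = ∑ i' ∈ (rh1 i).index, ∑ j' ∈ (rb1 j).index,
            f ((rh1 i).left i' ⊗ₜ[K] (rb1 j).left j') *
              (g ((rh1 i).right i' ⊗ₜ[K] (rb1 j).right j') *
                k (rh.right i ⊗ₜ[K] rb.right j)) := by
      intro j
      rw [conv_apply K H B f g _ _ (rh1 i) (rb1 j), Finset.sum_mul]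
      refine Finset.sum_congr rfl fun i' _ => ?_
      rw [Finset.sum_mul]
      exact Finset.sum_congr rfl fun j' _ => mul_assoc _ _ _
    simp_rw [hj]
    rw [Finset.sum_comm]
  have stepB : conv K H B f (conv K H B g k) (h ⊗ₜ[K] b)
      = ∑ i ∈ rh.index, ∑ i' ∈ (rh2 i).index, ∑ j ∈ rb.index, ∑ j' ∈ (rb2 j).index,
          f (rh.left i ⊗ₜ[K] rb.left j) *
            (g ((rh2 i).left i' ⊗ₜ[K] (rb2 j).left j') *
              k ((rh2 i).right i' ⊗ₜ[K] (rb2 j).right j')) := by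
    rw [conv_apply K H B f _ h b rh rb]
    refine Finset.sum_congr rfl fun i _ => ?_
    have hj : ∀ j, f (rh.left i ⊗ₜ[K] rb.left j) * conv K H B g k (rh.right i ⊗ₜ[K] rb.right j)
        = ∑ i' ∈ (rh2 i).index, ∑ j' ∈ (rb2 j).index,
            f (rh.left i ⊗ₜ[K] rb.left j) *
              (g ((rh2 i).left i' ⊗ₜ[K] (rb2 j).left j') *
                k ((rh2 i).right i' ⊗ₜ[K] (rb2 j).right j')) := by
      intro j
      rw [conv_apply K H B g k _ _ (rh2 i) (rb2 j), Finset.mul_sum]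
      exact Finset.sum_congr rfl fun i' _ => by rw [Finset.mul_sum]
    simp_rw [hj]
    rw [Finset.sum_comm]
  have expandL : NMap K H B f g k
      ((∑ i ∈ rh.index, ∑ i' ∈ (rh1 i).index,
          (rh1 i).left i' ⊗ₜ[K] ((rh1 i).right i' ⊗ₜ[K] rh.right i)) ⊗ₜ[K]
       (∑ j ∈ rb.index, ∑ j' ∈ (rb1 j).index,
          (rb1 j).left j' ⊗ₜ[K] ((rb1 j).right j' ⊗ₜ[K] rb.right j)))
      = ∑ j ∈ rb.index, ∑ j' ∈ (rb1 j).index, ∑ i ∈ rh.index, ∑ i' ∈ (rh1 i).index,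
          f ((rh1 i).left i' ⊗ₜ[K] (rb1 j).left j') *
            (g ((rh1 i).right i' ⊗ₜ[K] (rb1 j).right j') *
              k (rh.right i ⊗ₜ[K] rb.right j)) := by
    simp only [TensorProduct.sum_tmul, TensorProduct.tmul_sum, map_sum, NMap_tmul]
  have expandR : NMap K H B f g k
      ((∑ i ∈ rh.index, ∑ i' ∈ (rh2 i).index,
          rh.left i ⊗ₜ[K] ((rh2 i).left i' ⊗ₜ[K] (rh2 i).right i')) ⊗ₜ[K]
       (∑ j ∈ rb.index, ∑ j' ∈ (rb2 j).index,
          rb.left j ⊗ₜ[K] ((rb2 j).left j' ⊗ₜ[K] (rb2 j).right j')))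
      = ∑ j ∈ rb.index, ∑ j' ∈ (rb2 j).index, ∑ i ∈ rh.index, ∑ i' ∈ (rh2 i).index,
          f (rh.left i ⊗ₜ[K] rb.left j) *
            (g ((rh2 i).left i' ⊗ₜ[K] (rb2 j).left j') *
              k ((rh2 i).right i' ⊗ₜ[K] (rb2 j).right j')) := by
    simp only [TensorProduct.sum_tmul, TensorProduct.tmul_sum, map_sum, NMap_tmul]
  rw [stepA, stepB, sum4_comm rh.index rb.index (fun i => (rh1 i).index)
    (fun j => (rb1 j).index), sum4_comm rh.index rb.index (fun i => (rh2 i).index)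
    (fun j => (rb2 j).index), ← expandL, ← expandR, hH, hB]

lemma statement15_aux (φ : H ⊗[K] B →ₗ[K] B)
    (hbr : IsHopfBracoid K H B φ) (hco : IsCoalgebraMorphism K H B φ) :
    PhiMap K H B φ ∘ₗ LinearMap.lTensor H (HopfAlgebra.antipode (R := K))
      = conv K H B (HopfAlgebra.antipode (R := K) ∘ₗ φ) (uHat K H B φ) := by
  calc PhiMap K H B φ ∘ₗ LinearMap.lTensor H (HopfAlgebra.antipode (R := K))
      = conv K H B (eMap K H B)
          (PhiMap K H B φ ∘ₗ LinearMap.lTensor H (HopfAlgebra.antipode (R := K))) :=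
        (conv_eMap_left K H B _).symm
    _ = conv K H B (conv K H B (HopfAlgebra.antipode (R := K) ∘ₗ φ) φ)
          (PhiMap K H B φ ∘ₗ LinearMap.lTensor H (HopfAlgebra.antipode (R := K))) := by
        rw [conv_Sphi_phi K H B φ hco]
    _ = conv K H B (HopfAlgebra.antipode (R := K) ∘ₗ φ)
          (conv K H B φ
            (PhiMap K H B φ ∘ₗ LinearMap.lTensor H (HopfAlgebra.antipode (R := K)))) :=
        conv_assoc K H B _ _ _
    _ = conv K H B (HopfAlgebra.antipode (R := K) ∘ₗ φ) (uHat K H B φ) := by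
        rw [conv_phi_PhiS K H B φ hbr]

end ConvolutionAux

set_option synthInstance.maxHeartbeats 1000000 in
set_option maxHeartbeats 1000000 in
/-- If `(H, B, φ)` is a Hopf bracoid with `φ` a coalgebra morphism, then
`Φ(h ⊗ S_B(b)) = Σ S_B(φ(h₍₁₎ ⊗ b)) · u(h₍₂₎)`. -/
theorem statement15 (φ : H ⊗[K] B →ₗ[K] B)
    (hbr : IsHopfBracoid K H B φ) (hco : IsCoalgebraMorphism K H B φ)
    (h : H) (b : B) :
    PhiMap K H B φ (h ⊗ₜ[K] (HopfAlgebra.antipode (R := K) b)) =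
      (LinearMap.mul' K B
        ∘ₗ TensorProduct.map (HopfAlgebra.antipode (R := K) ∘ₗ φ) (uMap K H B φ)
        ∘ₗ (TensorProduct.comm K H (H ⊗[K] B)).toLinearMap
        ∘ₗ (TensorProduct.assoc K H H B).toLinearMap
        ∘ₗ LinearMap.rTensor B (TensorProduct.comm K H H).toLinearMap)
        ((Coalgebra.comul (R := K) h) ⊗ₜ[K] b) := by
  have key := statement15_aux K H B φ hbr hco
  have lhs : PhiMap K H B φ (h ⊗ₜ[K] (HopfAlgebra.antipode (R := K) b))
      = conv K H B (HopfAlgebra.antipode (R := K) ∘ₗ φ) (uHat K H B φ) (h ⊗ₜ[K] b) := by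
    rw [← key]; simp
  rw [lhs]
  let rh := Coalgebra.Repr.arbitrary K h
  let rb := Coalgebra.Repr.arbitrary K b
  rw [conv_apply K H B _ _ h b rh rb]
  have rhs_eq : (LinearMap.mul' K B
        ∘ₗ TensorProduct.map (HopfAlgebra.antipode (R := K) ∘ₗ φ) (uMap K H B φ)
        ∘ₗ (TensorProduct.comm K H (H ⊗[K] B)).toLinearMap
        ∘ₗ (TensorProduct.assoc K H H B).toLinearMap
        ∘ₗ LinearMap.rTensor B (TensorProduct.comm K H H).toLinearMap)
        ((Coalgebra.comul (R := K) h) ⊗ₜ[K] b)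
      = ∑ i ∈ rh.index,
          HopfAlgebra.antipode (R := K) (φ (rh.left i ⊗ₜ[K] b)) * uMap K H B φ (rh.right i) := by
    simp only [LinearMap.coe_comp, Function.comp_apply, LinearEquiv.coe_coe]
    rw [← rh.eq]
    simp only [map_sum, TensorProduct.sum_tmul, LinearMap.rTensor_tmul, LinearEquiv.coe_coe,
      TensorProduct.comm_tmul, TensorProduct.assoc_tmul, TensorProduct.map_tmul,
      LinearMap.mul'_apply, LinearMap.coe_comp, Function.comp_apply]
  rw [rhs_eq]
  refine Finset.sum_congr rfl fun i _ => ?_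
  simp only [LinearMap.coe_comp, Function.comp_apply, uHat_apply]
  have hterm : ∀ j, HopfAlgebra.antipode (R := K) (φ (rh.left i ⊗ₜ[K] rb.left j)) *
      (Coalgebra.counit (R := K) (rb.right j) • uMap K H B φ (rh.right i))
      = (HopfAlgebra.antipode (R := K)
          (φ (rh.left i ⊗ₜ[K] (Coalgebra.counit (R := K) (rb.right j) • rb.left j)))) *
        uMap K H B φ (rh.right i) := by
    intro j
    rw [TensorProduct.tmul_smul, map_smul, map_smul, mul_smul_comm, smul_mul_assoc]
  simp_rw [hterm]
  rw [← Finset.sum_mul]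
  congr 1
  rw [← map_sum, ← map_sum, ← TensorProduct.tmul_sum, sum_smul_counit K rb]

end HopfBracoidPaper
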